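/- arXiv:1303.0369 — 2 statements merged into one kernel-verified Lean document; each statement's English description precedes it below -/
import Mathlib

section
/- (Strictly monotone increasing property) Let G be a finite connected simple graph and let H be a connected spanning subgraph of G with H ≠ G. Then C(H) < C(G). -/
open Matrix Finset

/-- The Moore–Penrose pseudoinverse of a real square matrix, specified (when it exists)
by the four Penrose conditions. -/
noncomputable def pinv {n : Type*} [Fintype n] [DecidableEq n] (A : Matrix n n ℝ) :
    Matrix n n ℝ :=
  open scoped Classical in
  if h : ∃ B, A * B * A = A ∧ B * A * B = B ∧ (A * B)ᵀ = A * B ∧ (B * A)ᵀ = B * A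
  then h.choose else 0

/-- The resistance distance between two vertices of a graph:
`Ω_G(i,j) = (e_i − e_j)ᵀ L⁺ (e_i − e_j)` where `L⁺` is the Moore–Penrose pseudoinverse
of the Laplacian matrix of `G`. -/
noncomputable def resDist {V : Type*} [Fintype V] [DecidableEq V] (G : SimpleGraph V)
    (i j : V) : ℝ :=
  letI : DecidableRel G.Adj := Classical.decRel _
  (Pi.single i 1 - Pi.single j 1) ⬝ᵥ
    (pinv (G.lapMatrix ℝ)) *ᵥ (Pi.single i 1 - Pi.single j 1)

lemma resDist_comm {V : Type*} [Fintype V] [DecidableEq V] (G : SimpleGraph V) (i j : V) :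
    resDist G i j = resDist G j i := by
  unfold resDist
  rw [show (Pi.single j 1 - Pi.single i 1 : V → ℝ)
        = -(Pi.single i 1 - Pi.single j 1) by rw [neg_sub]]
  rw [Matrix.mulVec_neg, dotProduct_neg, neg_dotProduct, neg_neg]

/-- The global cyclicity index `C(G) = Σ_{ij ∈ E(G)} (1/Ω_G(i,j) − 1)`,
the sum over all edges of `G`. -/
noncomputable def cyclicity {V : Type*} [Fintype V] [DecidableEq V] (G : SimpleGraph V) : ℝ :=
  letI : DecidableRel G.Adj := Classical.decRel _
  ∑ e ∈ G.edgeFinset,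
    Sym2.lift ⟨fun i j => 1 / resDist G i j - 1,
      fun i j => by simp only []; rw [resDist_comm G i j]⟩ e

/-! Thomson's principle: for a connected graph, `1 / Ω_G(i, j)` is the least Dirichlet energy
`∑_{uv ∈ E(G)} (f u - f v)²` of a potential with `f i - f j = 1`. The lower bound is
Cauchy–Schwarz for the Laplacian quadratic form, and it is attained by the rescaled potential
`L⁺ (e_i - e_j)`. Energies only grow when edges are added, so conductances are monotone
(Rayleigh) and every edge has conductance at least `1`. For an edge `ab` of `G` missing from `H`,
the optimal potential of `G` spends `1` on `ab` and at least `1 / Ω_H(a, b) > 0` on the edges of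
`H`, so `σ_G(a, b) > 1`: this term of `C(G)` is positive and has no counterpart in `C(H)`. -/

open SimpleGraph

namespace Matrix

section MoorePenrose

variable {m n R : Type*} [Fintype m] [Fintype n] [CommRing R]

def IsMoorePenroseInverse (A : Matrix m n R) (B : Matrix n m R) : Prop :=
  A * B * A = A ∧ B * A * B = B ∧ (A * B)ᵀ = A * B ∧ (B * A)ᵀ = B * A

theorem IsMoorePenroseInverse.unique {A : Matrix m n R} {B C : Matrix n m R}
    (hB : A.IsMoorePenroseInverse B) (hC : A.IsMoorePenroseInverse C) : B = C := by
  obtain ⟨hABA, hBAB, hAB, hBA⟩ := hB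
  obtain ⟨hACA, hCAC, hAC, hCA⟩ := hC
  have hAB' : A * B = A * B * (A * C) :=
    calc A * B = (A * C * A * B)ᵀ := by rw [hACA, hAB]
      _ = A * B * (A * C) := by rw [Matrix.mul_assoc (A * C), transpose_mul, hAB, hAC]
  have hCA' : C * A = B * A * (C * A) :=
    calc C * A = (C * (A * B * A))ᵀ := by rw [hABA, hCA]
      _ = B * A * (C * A) := by
        rw [← Matrix.mul_assoc, ← Matrix.mul_assoc, Matrix.mul_assoc, transpose_mul, hBA, hCA]
  calc B = B * (A * B * (A * C)) := by rw [← hAB', ← Matrix.mul_assoc, hBAB]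
    _ = B * A * B * (A * C) := by simp only [Matrix.mul_assoc]
    _ = B * A * (C * A) * C := by rw [hBAB]; simp only [Matrix.mul_assoc, hCAC]
    _ = C := by rw [← hCA', hCAC]

end MoorePenrose

section Complement

/- `J` stands for the orthogonal projection onto `ker A` (for a Laplacian: onto the constants).
Adding it makes `A` invertible, and `(A + J)⁻¹ - J` is then the pseudoinverse of `A`. -/
variable {n R : Type*} [Fintype n] [DecidableEq n] [CommRing R] {A J : Matrix n n R}

theorem mul_nonsing_inv_add (hJA : J * A = 0) (hJJ : J * J = J) (hunit : IsUnit (A + J).det) :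
    J * (A + J)⁻¹ = J := by
  calc J * (A + J)⁻¹ = J * (A + J) * (A + J)⁻¹ := by rw [Matrix.mul_add, hJA, hJJ, zero_add]
    _ = J := mul_nonsing_inv_cancel_right _ J hunit

theorem nonsing_inv_add_mul (hAJ : A * J = 0) (hJJ : J * J = J) (hunit : IsUnit (A + J).det) :
    (A + J)⁻¹ * J = J := by
  calc (A + J)⁻¹ * J = (A + J)⁻¹ * ((A + J) * J) := by rw [Matrix.add_mul, hAJ, hJJ, zero_add]
    _ = J := nonsing_inv_mul_cancel_left _ J hunit

theorem mul_nonsing_inv_add_sub (hAJ : A * J = 0) (hJA : J * A = 0) (hJJ : J * J = J)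
    (hunit : IsUnit (A + J).det) : A * ((A + J)⁻¹ - J) = 1 - J :=
  calc A * ((A + J)⁻¹ - J) = (A + J) * (A + J)⁻¹ - J * (A + J)⁻¹ - A * J := by
        rw [Matrix.mul_sub, Matrix.add_mul, add_sub_cancel_right]
    _ = 1 - J := by rw [mul_nonsing_inv _ hunit, mul_nonsing_inv_add hJA hJJ hunit, hAJ, sub_zero]

theorem nonsing_inv_add_sub_mul (hAJ : A * J = 0) (hJA : J * A = 0) (hJJ : J * J = J)
    (hunit : IsUnit (A + J).det) : ((A + J)⁻¹ - J) * A = 1 - J :=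
  calc ((A + J)⁻¹ - J) * A = (A + J)⁻¹ * (A + J) - (A + J)⁻¹ * J - J * A := by
        rw [Matrix.sub_mul, Matrix.mul_add, add_sub_cancel_right]
    _ = 1 - J := by rw [nonsing_inv_mul _ hunit, nonsing_inv_add_mul hAJ hJJ hunit, hJA, sub_zero]

theorem isMoorePenroseInverse_nonsing_inv_add_sub (hAJ : A * J = 0) (hJA : J * A = 0)
    (hJJ : J * J = J) (hJ : Jᵀ = J) (hunit : IsUnit (A + J).det) :
    A.IsMoorePenroseInverse ((A + J)⁻¹ - J) := by
  have hAB := mul_nonsing_inv_add_sub hAJ hJA hJJ hunit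
  have hBA := nonsing_inv_add_sub_mul hAJ hJA hJJ hunit
  refine ⟨?_, ?_, ?_, ?_⟩
  · rw [hAB, Matrix.sub_mul, Matrix.one_mul, hJA, sub_zero]
  · rw [hBA, Matrix.sub_mul, Matrix.one_mul, Matrix.mul_sub, hJJ,
      mul_nonsing_inv_add hJA hJJ hunit, sub_self, sub_zero]
  · rw [hAB, transpose_sub, transpose_one, hJ]
  · rw [hBA, transpose_sub, transpose_one, hJ]

end Complement

/- Cauchy–Schwarz for the semi-inner product `⟨f, g⟩ = f ⬝ᵥ M *ᵥ g`, in which `⟨g, f⟩ = x ⬝ᵥ f`. -/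
theorem PosSemidef.sq_dotProduct_le_of_mulVec_eq {n : Type*} [Fintype n] {M : Matrix n n ℝ}
    (hM : M.PosSemidef) {g x : n → ℝ} (hg : M *ᵥ g = x) (f : n → ℝ) :
    (x ⬝ᵥ f) ^ 2 ≤ (f ⬝ᵥ M *ᵥ f) * (x ⬝ᵥ g) := by
  have hMt : Mᵀ = M := by
    simpa only [conjTranspose_eq_transpose_of_trivial] using hM.isHermitian.eq
  have hgM : ∀ h, g ⬝ᵥ M *ᵥ h = x ⬝ᵥ h := fun h => by
    rw [dotProduct_mulVec, ← mulVec_transpose, hMt, hg]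
  have hquad : ∀ t : ℝ, 0 ≤ (x ⬝ᵥ g) * (t * t) + 2 * (x ⬝ᵥ f) * t + f ⬝ᵥ M *ᵥ f := fun t => by
    have h := hM.dotProduct_mulVec_nonneg (f + t • g)
    simp only [star_trivial, mulVec_add, mulVec_smul, add_dotProduct, dotProduct_add,
      smul_dotProduct, dotProduct_smul, hgM, smul_eq_mul] at h
    rw [hg, dotProduct_comm f x] at h
    linarith
  have h := discrim_le_zero hquad
  rw [discrim] at h
  linarith

theorem single_sub_single_dotProduct {n R : Type*} [Fintype n] [DecidableEq n] [Ring R]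
    (i j : n) (f : n → R) : (Pi.single i 1 - Pi.single j 1) ⬝ᵥ f = f i - f j := by
  simp [sub_dotProduct]

noncomputable def averaging (n : Type*) [Fintype n] : Matrix n n ℝ :=
  of fun _ _ => (Fintype.card n : ℝ)⁻¹

variable {n : Type*} [Fintype n]

theorem averaging_mulVec (f : n → ℝ) :
    averaging n *ᵥ f = Function.const n ((∑ i, f i) / Fintype.card n) := by
  ext i
  simp [averaging, mulVec, dotProduct, div_eq_inv_mul, mul_sum]

theorem transpose_averaging : (averaging n)ᵀ = averaging n := rfl

theorem averaging_mul_self [Nonempty n] : averaging n * averaging n = averaging n := by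
  ext i j
  simp [averaging, mul_apply]

end Matrix

theorem pinv_eq_of_isMoorePenroseInverse {n : Type*} [Fintype n] [DecidableEq n]
    {A B : Matrix n n ℝ} (hB : A.IsMoorePenroseInverse B) : pinv A = B := by
  rw [pinv]
  split_ifs with h
  · exact IsMoorePenroseInverse.unique h.choose_spec hB
  · exact absurd ⟨B, hB⟩ h

namespace SimpleGraph

variable {V : Type*} [Fintype V] [DecidableEq V]

section Energy

variable (G : SimpleGraph V) [DecidableRel G.Adj]

noncomputable def dirichletEnergy (f : V → ℝ) : ℝ := f ⬝ᵥ G.lapMatrix ℝ *ᵥ f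

theorem dirichletEnergy_eq_sum (f : V → ℝ) :
    G.dirichletEnergy f = (∑ i, ∑ j, if G.Adj i j then (f i - f j) ^ 2 else 0) / 2 := by
  rw [dirichletEnergy, ← toLinearMap₂'_apply', lapMatrix_toLinearMap₂']

theorem dirichletEnergy_nonneg (f : V → ℝ) : 0 ≤ G.dirichletEnergy f := by
  rw [dirichletEnergy_eq_sum]
  positivity

theorem dirichletEnergy_smul (c : ℝ) (f : V → ℝ) :
    G.dirichletEnergy (c • f) = c ^ 2 * G.dirichletEnergy f := by
  simp only [dirichletEnergy, mulVec_smul, smul_dotProduct, dotProduct_smul, smul_eq_mul]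
  ring

variable {G}

theorem sq_sub_le_dirichletEnergy {a b : V} (hab : G.Adj a b) (f : V → ℝ) :
    (f a - f b) ^ 2 ≤ G.dirichletEnergy f := by
  let t : V × V → ℝ := fun p => if G.Adj p.1 p.2 then (f p.1 - f p.2) ^ 2 else 0
  have hpair : ∑ p ∈ {(a, b), (b, a)}, t p ≤ ∑ p, t p :=
    sum_le_univ_sum_of_nonneg fun p => by positivity
  rw [sum_pair (by simp [hab.ne]), Fintype.sum_prod_type] at hpair
  simp only [t, if_pos hab, if_pos hab.symm] at hpair
  rw [dirichletEnergy_eq_sum]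
  nlinarith

theorem dirichletEnergy_add_sdiff {H : SimpleGraph V} [DecidableRel H.Adj] (hle : H ≤ G)
    (f : V → ℝ) : H.dirichletEnergy f + (G \ H).dirichletEnergy f = G.dirichletEnergy f := by
  simp only [dirichletEnergy_eq_sum, ← add_div, ← sum_add_distrib, sdiff_adj]
  congr! 3 with i - j -
  by_cases hH : H.Adj i j
  · simp [hH, hle hH]
  · simp [hH]

theorem dirichletEnergy_mono {H : SimpleGraph V} [DecidableRel H.Adj] (hle : H ≤ G)
    (f : V → ℝ) : H.dirichletEnergy f ≤ G.dirichletEnergy f := by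
  rw [← dirichletEnergy_add_sdiff hle]
  linarith [(G \ H).dirichletEnergy_nonneg f]

end Energy

section LaplacianPseudoinverse

variable (G : SimpleGraph V) [DecidableRel G.Adj]

theorem lapMatrix_mul_averaging : G.lapMatrix ℝ * averaging V = 0 := by
  ext i j
  have h := congrFun (G.lapMatrix_mulVec_const_eq_zero (R := ℝ)) i
  simp only [mulVec, dotProduct, mul_one, Pi.zero_apply] at h
  simp only [mul_apply, averaging, of_apply, ← sum_mul, h, zero_mul, Matrix.zero_apply]

theorem averaging_mul_lapMatrix : averaging V * G.lapMatrix ℝ = 0 := by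
  rw [← (G.isSymm_lapMatrix (R := ℝ)).eq, ← transpose_averaging, ← transpose_mul,
    lapMatrix_mul_averaging, transpose_zero]

variable {G}

theorem isUnit_det_lapMatrix_add_averaging (hG : G.Connected) :
    IsUnit (G.lapMatrix ℝ + averaging V).det := by
  have : Nonempty V := hG.nonempty
  rw [isUnit_iff_ne_zero, Ne, ← exists_mulVec_eq_zero_iff]
  rintro ⟨v, hv, hLJv⟩
  have hJv : averaging V *ᵥ v = 0 := by
    simpa only [mulVec_mulVec, Matrix.mul_add, averaging_mul_lapMatrix, averaging_mul_self,
      zero_add, mulVec_zero] using congrArg (averaging V *ᵥ ·) hLJv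
  have hLv : G.lapMatrix ℝ *ᵥ v = 0 := by rwa [add_mulVec, hJv, add_zero] at hLJv
  have hconst : ∀ i j, v i = v j := fun i j =>
    (lapMatrix_mulVec_eq_zero_iff_forall_reachable G).1 hLv i j (hG.preconnected i j)
  refine hv (funext fun i => ?_)
  have hsum : ∑ k, v k = 0 := by
    simpa [averaging_mulVec, Fintype.card_ne_zero] using congrFun hJv i
  simpa [← hconst i, Fintype.card_ne_zero] using hsum

theorem pinv_lapMatrix (hG : G.Connected) :
    pinv (G.lapMatrix ℝ) = (G.lapMatrix ℝ + averaging V)⁻¹ - averaging V :=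
  have : Nonempty V := hG.nonempty
  pinv_eq_of_isMoorePenroseInverse <| isMoorePenroseInverse_nonsing_inv_add_sub
    (lapMatrix_mul_averaging G) (averaging_mul_lapMatrix G) averaging_mul_self
    transpose_averaging (isUnit_det_lapMatrix_add_averaging hG)

theorem lapMatrix_mulVec_pinv_mulVec (hG : G.Connected) {x : V → ℝ} (hx : ∑ i, x i = 0) :
    G.lapMatrix ℝ *ᵥ (pinv (G.lapMatrix ℝ) *ᵥ x) = x := by
  have : Nonempty V := hG.nonempty
  rw [mulVec_mulVec, pinv_lapMatrix hG, mul_nonsing_inv_add_sub (lapMatrix_mul_averaging G)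
    (averaging_mul_lapMatrix G) averaging_mul_self (isUnit_det_lapMatrix_add_averaging hG),
    sub_mulVec, one_mulVec, averaging_mulVec, hx, zero_div]
  exact sub_zero x

end LaplacianPseudoinverse

end SimpleGraph

section Resistance

variable {V : Type*} [Fintype V] [DecidableEq V] {G H : SimpleGraph V}

theorem resDist_eq_dotProduct [DecidableRel G.Adj] (i j : V) :
    resDist G i j = (Pi.single i 1 - Pi.single j 1) ⬝ᵥ
      pinv (G.lapMatrix ℝ) *ᵥ (Pi.single i 1 - Pi.single j 1) := by
  unfold resDist
  congr!

theorem sq_sub_le_dirichletEnergy_mul_resDist [DecidableRel G.Adj] (hG : G.Connected)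
    (i j : V) (f : V → ℝ) : (f i - f j) ^ 2 ≤ G.dirichletEnergy f * resDist G i j := by
  rw [resDist_eq_dotProduct, ← single_sub_single_dotProduct i j f]
  exact (G.posSemidef_lapMatrix (R := ℝ)).sq_dotProduct_le_of_mulVec_eq
    (G.lapMatrix_mulVec_pinv_mulVec hG (by simp [sum_sub_distrib])) f

theorem exists_dirichletEnergy_eq_resDist [DecidableRel G.Adj] (hG : G.Connected) (i j : V) :
    ∃ g : V → ℝ, g i - g j = resDist G i j ∧ G.dirichletEnergy g = resDist G i j := by
  set x : V → ℝ := Pi.single i 1 - Pi.single j 1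
  have hLg : G.lapMatrix ℝ *ᵥ (pinv (G.lapMatrix ℝ) *ᵥ x) = x :=
    G.lapMatrix_mulVec_pinv_mulVec hG (by simp [x, sum_sub_distrib])
  refine ⟨pinv (G.lapMatrix ℝ) *ᵥ x, ?_, ?_⟩
  · rw [resDist_eq_dotProduct, single_sub_single_dotProduct]
  · rw [resDist_eq_dotProduct, dirichletEnergy, hLg, dotProduct_comm]

theorem resDist_pos (hG : G.Connected) {i j : V} (hij : i ≠ j) : 0 < resDist G i j := by
  classical
  obtain ⟨g, -, hg⟩ := exists_dirichletEnergy_eq_resDist hG i j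
  have h := sq_sub_le_dirichletEnergy_mul_resDist hG i j (Pi.single i 1)
  refine lt_of_le_of_ne (hg ▸ G.dirichletEnergy_nonneg g) fun h0 => ?_
  norm_num [hij.symm, ← h0] at h

theorem one_div_resDist_le_dirichletEnergy [DecidableRel G.Adj] (hG : G.Connected) {i j : V}
    {f : V → ℝ} (hf : f i - f j = 1) : 1 / resDist G i j ≤ G.dirichletEnergy f := by
  have hij : i ≠ j := by
    rintro rfl
    simp at hf
  rw [div_le_iff₀ (resDist_pos hG hij)]
  simpa [hf] using sq_sub_le_dirichletEnergy_mul_resDist hG i j f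

theorem exists_dirichletEnergy_eq_one_div_resDist [DecidableRel G.Adj] (hG : G.Connected)
    {i j : V} (hij : i ≠ j) :
    ∃ g : V → ℝ, g i - g j = 1 ∧ G.dirichletEnergy g = 1 / resDist G i j := by
  obtain ⟨g, hg, hE⟩ := exists_dirichletEnergy_eq_resDist hG i j
  have hpos := resDist_pos hG hij
  refine ⟨(resDist G i j)⁻¹ • g, ?_, ?_⟩
  · simp [← mul_sub, hg, hpos.ne']
  · rw [dirichletEnergy_smul, hE]
    field_simp

theorem one_le_one_div_resDist (hG : G.Connected) {i j : V} (hij : G.Adj i j) :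
    1 ≤ 1 / resDist G i j := by
  classical
  obtain ⟨g, hg, hE⟩ := exists_dirichletEnergy_eq_one_div_resDist hG hij.ne
  calc 1 = (g i - g j) ^ 2 := by rw [hg, one_pow]
    _ ≤ G.dirichletEnergy g := sq_sub_le_dirichletEnergy hij g
    _ = 1 / resDist G i j := hE

theorem one_div_resDist_le_of_le (hH : H.Connected) (hle : H ≤ G) {i j : V} (hij : i ≠ j) :
    1 / resDist H i j ≤ 1 / resDist G i j := by
  classical
  obtain ⟨g, hg, hE⟩ := exists_dirichletEnergy_eq_one_div_resDist (hH.mono hle) hij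
  calc 1 / resDist H i j ≤ H.dirichletEnergy g := one_div_resDist_le_dirichletEnergy hH hg
    _ ≤ G.dirichletEnergy g := dirichletEnergy_mono hle g
    _ = 1 / resDist G i j := hE

theorem one_lt_one_div_resDist_of_not_adj (hH : H.Connected) (hle : H ≤ G) {a b : V}
    (hab : G.Adj a b) (hab' : ¬H.Adj a b) : 1 < 1 / resDist G a b := by
  classical
  obtain ⟨g, hg, hE⟩ := exists_dirichletEnergy_eq_one_div_resDist (hH.mono hle) hab.ne
  have hH_pos : 0 < 1 / resDist H a b := one_div_pos.2 (resDist_pos hH hab.ne)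
  calc 1 < (g a - g b) ^ 2 + 1 / resDist H a b := by rw [hg]; linarith
    _ ≤ (G \ H).dirichletEnergy g + H.dirichletEnergy g := by
        gcongr
        · exact sq_sub_le_dirichletEnergy ((sdiff_adj G H a b).2 ⟨hab, hab'⟩) g
        · exact one_div_resDist_le_dirichletEnergy hH hg
    _ = 1 / resDist G a b := by rw [add_comm, dirichletEnergy_add_sdiff hle, hE]

end Resistance

section Cyclicity

variable {V : Type*} [Fintype V] [DecidableEq V] {G H : SimpleGraph V}

noncomputable def edgeCyclicity (G : SimpleGraph V) : Sym2 V → ℝ :=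
  Sym2.lift ⟨fun i j => 1 / resDist G i j - 1,
    fun i j => by simp only []; rw [resDist_comm G i j]⟩

theorem cyclicity_eq_sum [DecidableRel G.Adj] :
    cyclicity G = ∑ e ∈ G.edgeFinset, edgeCyclicity G e := by
  unfold cyclicity edgeCyclicity
  congr!

theorem edgeCyclicity_nonneg (hG : G.Connected) {e : Sym2 V} (he : e ∈ G.edgeSet) :
    0 ≤ edgeCyclicity G e := by
  induction e using Sym2.ind with
  | _ i j => exact sub_nonneg.2 (one_le_one_div_resDist hG he)

theorem edgeCyclicity_le_of_le (hH : H.Connected) (hle : H ≤ G) {e : Sym2 V}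
    (he : e ∈ H.edgeSet) : edgeCyclicity H e ≤ edgeCyclicity G e := by
  induction e using Sym2.ind with
  | _ i j => exact sub_le_sub_right (one_div_resDist_le_of_le hH hle (H.ne_of_adj he)) 1

theorem edgeCyclicity_pos_of_notMem (hH : H.Connected) (hle : H ≤ G) {e : Sym2 V}
    (heG : e ∈ G.edgeSet) (heH : e ∉ H.edgeSet) : 0 < edgeCyclicity G e := by
  induction e using Sym2.ind with
  | _ a b => exact sub_pos.2 (one_lt_one_div_resDist_of_not_adj hH hle heG heH)

end Cyclicity

theorem stmt3_general {V : Type*} [Fintype V] [DecidableEq V] (G H : SimpleGraph V)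
    (hH : H.Connected) (hle : H ≤ G) (hne : H ≠ G) :
    cyclicity H < cyclicity G := by
  classical
  have hG : G.Connected := hH.mono hle
  obtain ⟨e, heG, heH⟩ := exists_of_ssubset (edgeFinset_ssubset_edgeFinset.2 (hle.lt_of_ne hne))
  rw [cyclicity_eq_sum, cyclicity_eq_sum]
  calc ∑ e ∈ H.edgeFinset, edgeCyclicity H e
      ≤ ∑ e ∈ H.edgeFinset, edgeCyclicity G e :=
        sum_le_sum fun e he => edgeCyclicity_le_of_le hH hle (mem_edgeFinset.1 he)
    _ < ∑ e ∈ G.edgeFinset, edgeCyclicity G e :=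
        sum_lt_sum_of_subset (edgeFinset_mono hle) heG heH
          (edgeCyclicity_pos_of_notMem hH hle (mem_edgeFinset.1 heG) (mt mem_edgeFinset.2 heH))
          fun e he _ => edgeCyclicity_nonneg hG (mem_edgeFinset.1 he)

theorem stmt3 {V : Type*} [Fintype V] [DecidableEq V] (G H : SimpleGraph V)
    (hG : G.Connected) (hH : H.Connected) (hle : H ≤ G) (hne : H ≠ G) :
    cyclicity H < cyclicity G :=
  stmt3_general G H hH hle hne
end

section
/- Let G be a finite connected simple graph with m edges and maximum degree Δ(G). Then C(G) ≤ m(Δ(G) − 1)/2. -/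
open Matrix Finset

/-!
For an edge `ij` put `b = e_i - e_j` and `x = L⁺ b`. Since `b` is orthogonal to the kernel of the
Laplacian `L` (the vectors constant on components), `L x = b`, and Cauchy–Schwarz for the
positive semidefinite form `L` gives `(bᵀb)² ≤ (bᵀLb)(bᵀx)`, i.e.
`4 ≤ (d_i + d_j + 2) Ω(i,j)`. Hence `σ(i,j) - 1 ≤ (d_i + d_j + 2)/4 - 1 ≤ (Δ - 1)/2` on every
edge.
-/

namespace Matrix

variable {n R : Type*} [Fintype n]

theorem mul_mul_eq_self_of_penrose [CommRing R] {L P : Matrix n n R} (hL : L.IsSymm)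
    (hLPL : L * P * L = L) (hLP : (L * P)ᵀ = L * P) : L * (L * P) = L :=
  calc L * (L * P) = L * (L * P)ᵀ := by rw [hLP]
    _ = (L * P * L)ᵀ := by simp only [transpose_mul, hL.eq, Matrix.mul_assoc]
    _ = L := by rw [hLPL, hL.eq]

section Ordered

variable [Field R] [LinearOrder R] [IsStrictOrderedRing R]

theorem mulVec_mulVec_eq_of_orthogonal_ker {L P : Matrix n n R} (hL : L.IsSymm)
    (hLPL : L * P * L = L) (hLP : (L * P)ᵀ = L * P) {b : n → R}
    (hb : ∀ v, L *ᵥ v = 0 → b ⬝ᵥ v = 0) : L *ᵥ (P *ᵥ b) = b := by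
  set v := b - (L * P) *ᵥ b with hv
  have hLv : L *ᵥ v = 0 := by
    rw [hv, mulVec_sub, mulVec_mulVec, mul_mul_eq_self_of_penrose hL hLPL hLP, sub_self]
  have hLPv : (L * P) *ᵥ b ⬝ᵥ v = 0 := by
    rw [dotProduct_comm, dotProduct_mulVec, ← vecMul_vecMul, ← hL.eq, vecMul_transpose, hLv,
      zero_vecMul, zero_dotProduct]
  have hv0 : v = 0 := by
    rw [← dotProduct_self_eq_zero]
    conv_lhs => enter [1]; rw [hv]
    rw [sub_dotProduct, hb v hLv, hLPv, sub_self]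
  rw [mulVec_mulVec, ← sub_eq_zero, ← neg_sub, ← hv, hv0, neg_zero]

theorem sq_dotProduct_self_le_of_mulVec_eq [StarRing R] [TrivialStar R] {L : Matrix n n R}
    (hL : L.PosSemidef) {x b : n → R} (hx : L *ᵥ x = b) :
    (b ⬝ᵥ b) ^ 2 ≤ (b ⬝ᵥ L *ᵥ b) * (x ⬝ᵥ b) := by
  have hLt : Lᵀ = L := by rw [← conjTranspose_eq_transpose_of_trivial, hL.isHermitian.eq]
  have hxLb : x ⬝ᵥ L *ᵥ b = b ⬝ᵥ b := by
    rw [dotProduct_mulVec, ← hLt, vecMul_transpose, hx]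
  -- Cauchy–Schwarz for the semidefinite form `L`, as a nonpositive discriminant
  have hquad : ∀ t : R, 0 ≤ (b ⬝ᵥ L *ᵥ b) * (t * t) + -2 * (b ⬝ᵥ b) * t + x ⬝ᵥ b := by
    intro t
    have := hL.dotProduct_mulVec_nonneg (t • b - x)
    simp only [star_trivial, mulVec_sub, mulVec_smul, hx, dotProduct_sub, sub_dotProduct,
      dotProduct_smul, smul_dotProduct, hxLb, smul_eq_mul] at this
    linarith
  have := discrim_le_zero hquad
  rw [discrim] at this
  linarith

end Ordered

def IsPenroseInverse (A B : Matrix n n ℝ) : Prop :=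
  A * B * A = A ∧ B * A * B = B ∧ (A * B)ᵀ = A * B ∧ (B * A)ᵀ = B * A

variable [DecidableEq n] {A : Matrix n n ℝ}

theorem isPenroseInverse_pinv (h : ∃ B, IsPenroseInverse A B) : IsPenroseInverse A (pinv A) := by
  unfold IsPenroseInverse at h ⊢
  rw [pinv, dif_pos h]
  exact h.choose_spec

theorem pinv_eq_zero (h : ¬∃ B, IsPenroseInverse A B) : pinv A = 0 :=
  dif_neg h

end Matrix

theorem dotProduct_single_sub_single_self {V : Type*} [Fintype V] [DecidableEq V] {i j : V}
    (hij : i ≠ j) :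
    (Pi.single i 1 - Pi.single j 1 : V → ℝ) ⬝ᵥ (Pi.single i 1 - Pi.single j 1) = 2 := by
  simp [dotProduct_sub, hij, hij.symm]
  norm_num

namespace SimpleGraph

variable {V : Type*} [Fintype V] [DecidableEq V] (G : SimpleGraph V) [DecidableRel G.Adj] {i j : V}

theorem resDist_eq_dotProduct_pinv_lapMatrix :
    resDist G i j = (Pi.single i 1 - Pi.single j 1) ⬝ᵥ
      pinv (G.lapMatrix ℝ) *ᵥ (Pi.single i 1 - Pi.single j 1) := by
  unfold resDist
  congr!

theorem dotProduct_lapMatrix_mulVec_single_sub_single (hij : G.Adj i j) :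
    (Pi.single i 1 - Pi.single j 1) ⬝ᵥ G.lapMatrix ℝ *ᵥ (Pi.single i 1 - Pi.single j 1) =
      G.degree i + G.degree j + 2 := by
  simp only [mulVec_sub, dotProduct_sub, sub_dotProduct, single_one_dotProduct,
    lapMatrix_mulVec_apply, Pi.single_eq_same, Pi.single_eq_of_ne hij.ne,
    Pi.single_eq_of_ne hij.ne.symm, sum_pi_single', mem_neighborFinset, hij, hij.symm, G.irrefl, if_true, if_false]
  ring

theorem single_sub_single_dotProduct_eq_zero (hij : G.Reachable i j) {v : V → ℝ}
    (hv : G.lapMatrix ℝ *ᵥ v = 0) : (Pi.single i 1 - Pi.single j 1) ⬝ᵥ v = 0 := by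
  rw [sub_dotProduct, single_one_dotProduct, single_one_dotProduct,
    (lapMatrix_mulVec_eq_zero_iff_forall_reachable G).mp hv i j hij, sub_self]

theorem four_le_mul_resDist (hij : G.Adj i j)
    (hP : IsPenroseInverse (G.lapMatrix ℝ) (pinv (G.lapMatrix ℝ))) :
    4 ≤ (G.degree i + G.degree j + 2) * resDist G i j := by
  obtain ⟨hLPL, -, hLP, -⟩ := hP
  set b : V → ℝ := Pi.single i 1 - Pi.single j 1
  have hx : G.lapMatrix ℝ *ᵥ (pinv (G.lapMatrix ℝ) *ᵥ b) = b :=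
    mulVec_mulVec_eq_of_orthogonal_ker (isSymm_lapMatrix ℝ G) hLPL hLP
      fun _ => G.single_sub_single_dotProduct_eq_zero hij.reachable
  have := sq_dotProduct_self_le_of_mulVec_eq (G.posSemidef_lapMatrix ℝ) hx
  rw [dotProduct_single_sub_single_self hij.ne, G.dotProduct_lapMatrix_mulVec_single_sub_single hij,
    dotProduct_comm, ← resDist_eq_dotProduct_pinv_lapMatrix] at this
  linarith

theorem one_div_resDist_sub_one_le (hij : G.Adj i j) :
    1 / resDist G i j - 1 ≤ ((G.maxDegree : ℝ) - 1) / 2 := by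
  have hΔ : (0 : ℝ) ≤ G.maxDegree := Nat.cast_nonneg _
  by_cases h : ∃ P, IsPenroseInverse (G.lapMatrix ℝ) P
  · have h4 := G.four_le_mul_resDist hij (isPenroseInverse_pinv h)
    have hi : (G.degree i : ℝ) ≤ G.maxDegree := by exact_mod_cast G.degree_le_maxDegree i
    have hj : (G.degree j : ℝ) ≤ G.maxDegree := by exact_mod_cast G.degree_le_maxDegree j
    have hΩ : 0 < resDist G i j := by
      by_contra! h0
      nlinarith
    rw [div_sub_one hΩ.ne', div_le_div_iff₀ hΩ two_pos]
    nlinarith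
  -- `pinv` is specified only when a Penrose inverse exists; otherwise it is `0`, and `1 / 0 = 0`
  · rw [resDist_eq_dotProduct_pinv_lapMatrix, pinv_eq_zero h, zero_mulVec, dotProduct_zero,
      div_zero]
    linarith

theorem cyclicity_le :
    cyclicity G ≤ #G.edgeFinset * ((G.maxDegree : ℝ) - 1) / 2 := by
  unfold cyclicity
  refine (Finset.sum_le_card_nsmul _ _ (((G.maxDegree : ℝ) - 1) / 2) ?_).trans_eq ?_
  · intro e he
    induction e using Sym2.ind with
    | h i j => exact G.one_div_resDist_sub_one_le (by simpa using he)
  · rw [nsmul_eq_mul, mul_div_assoc]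
    congr!

end SimpleGraph

theorem stmt12_general {V : Type*} [Fintype V] [DecidableEq V] (G : SimpleGraph V) [DecidableRel G.Adj]
    (m : ℕ) (hm : m = G.edgeFinset.card) :
    cyclicity G ≤ (m : ℝ) * ((G.maxDegree : ℝ) - 1) / 2 := by
  subst hm
  exact G.cyclicity_le

theorem stmt12 {V : Type*} [Fintype V] [DecidableEq V] (G : SimpleGraph V) [DecidableRel G.Adj]
    (hG : G.Connected) (m : ℕ) (hm : m = G.edgeFinset.card) :
    cyclicity G ≤ (m : ℝ) * ((G.maxDegree : ℝ) - 1) / 2 :=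
  stmt12_general G m hm
end
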